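/- In the low temperature regime with parameters k and c (k, c > 0), there exists a constant C₃ > 0 such that for every a with 0 < a < 8k − 4 there is L₀ with: for all L ≥ L₀, P(T ≤ L^{8k−4−a}) ≤ C₃ L^{−a}, where T is the first time at which at least two distinct sites simultaneously have atypical uniform numbers. -/

import Mathlib

open Real Filter MeasureTheory ProbabilityTheory

noncomputable section

/-- A site of the 2d discrete torus `(ℤ/Lℤ)²`. -/
abbrev Site (L : ℕ) := ZMod L × ZMod L

/-- `ε_L = e^{−2J+q}/(2 cosh(2J−q))` with `J = k log L`, `q = c (log L)/L`. -/
def epsL (L : ℕ) (k c : ℝ) : ℝ :=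
  Real.exp (-(2 * (k * Real.log L)) + c * Real.log L / L) /
    (2 * Real.cosh (2 * (k * Real.log L) - c * Real.log L / L))

/-- The uniform number `U_x(n)` is *typical* if it lies in `(ε_L, 1 − ε_L)`. -/
def typical (L : ℕ) (k c : ℝ) (u : ℝ) : Prop :=
  u ∈ Set.Ioo (epsL L k c) (1 - epsL L k c)

/-! Two given sites are both atypical at a given time with probability at most `(2ε)²`, and
there are at most `L⁴` pairs of sites and `L^{8k−4−a}` times, so a union bound gives
`P(T ≤ L^{8k−4−a}) ≤ L^{8k−4−a} · L⁴ · (2ε)²`. Since `ε ≤ e^{−2(2J−q)} = e^{2q} L^{−4k}` and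
`q → 0`, this is at most `4e² L^{−a}` for large `L`. -/

open Set Topology
open scoped ENNReal

theorem exp_neg_div_two_cosh_le (t : ℝ) : exp (-t) / (2 * cosh t) ≤ exp (-2 * t) := by
  have hcosh : exp t ≤ 2 * cosh t := by
    rw [cosh_eq]
    linarith [exp_pos (-t)]
  calc exp (-t) / (2 * cosh t) ≤ exp (-t) / exp t :=
        div_le_div_of_nonneg_left (exp_pos _).le (exp_pos _) hcosh
    _ = exp (-2 * t) := by rw [← exp_sub]; ring_nf

theorem epsL_nonneg (L : ℕ) (k c : ℝ) : 0 ≤ epsL L k c := by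
  unfold epsL
  positivity

theorem epsL_le_exp_mul_rpow {L : ℕ} (hL : 0 < L) (k c : ℝ) :
    epsL L k c ≤ exp (2 * (c * log L / L)) * (L : ℝ) ^ (-(4 * k)) := by
  calc epsL L k c = exp (-(2 * (k * log L) - c * log L / L)) /
        (2 * cosh (2 * (k * log L) - c * log L / L)) := by
        rw [epsL]
        ring_nf
    _ ≤ exp (-2 * (2 * (k * log L) - c * log L / L)) := exp_neg_div_two_cosh_le _
    _ = exp (2 * (c * log L / L)) * (L : ℝ) ^ (-(4 * k)) := by
        rw [rpow_def_of_pos (by positivity), ← exp_add]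
        ring_nf

theorem eventually_epsL_le (k c : ℝ) :
    ∀ᶠ L : ℕ in atTop, epsL L k c ≤ exp 1 * (L : ℝ) ^ (-(4 * k)) := by
  have hq : Tendsto (fun L : ℕ => 2 * (c * (log L / L))) atTop (𝓝 (2 * (c * 0))) :=
    ((isLittleO_log_id_atTop.tendsto_div_nhds_zero.comp
      tendsto_natCast_atTop_atTop).const_mul c).const_mul 2
  filter_upwards [hq.eventually_le_const (by norm_num : 2 * (c * (0 : ℝ)) < 1),
    eventually_gt_atTop 0] with L hqL hL
  refine (epsL_le_exp_mul_rpow hL k c).trans (mul_le_mul_of_nonneg_right ?_ (by positivity))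
  rw [exp_le_exp, mul_div_assoc]
  exact hqL

section UniformLaw

variable {Ω : Type*} [MeasurableSpace Ω] {μ : Measure Ω}

theorem volume_compl_Ioo_inter_Ioo_le (ε : ℝ) :
    volume ((Ioo ε (1 - ε))ᶜ ∩ Ioo 0 1) ≤ ENNReal.ofReal (2 * ε) := by
  have hsub : (Ioo ε (1 - ε))ᶜ ∩ Ioo 0 1 ⊆ Ioc 0 ε ∪ Ico (1 - ε) 1 := by
    rintro u ⟨hu, hu0, hu1⟩
    by_cases huε : u ≤ ε
    · exact Or.inl ⟨hu0, huε⟩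
    · exact Or.inr ⟨not_lt.mp fun h => hu ⟨not_le.mp huε, h⟩, hu1⟩
  calc volume ((Ioo ε (1 - ε))ᶜ ∩ Ioo 0 1)
      ≤ volume (Ioc 0 ε) + volume (Ico (1 - ε) 1) :=
        (measure_mono hsub).trans (measure_union_le _ _)
    _ = 2 * ENNReal.ofReal ε := by
        rw [Real.volume_Ioc, Real.volume_Ico, sub_zero, sub_sub_cancel, two_mul]
    _ = ENNReal.ofReal (2 * ε) := by
        rw [ENNReal.ofReal_mul zero_le_two, ENNReal.ofReal_ofNat]

theorem measure_preimage_compl_Ioo_le {X : Ω → ℝ} (hX : Measurable X)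
    (hlaw : μ.map X = volume.restrict (Ioo 0 1)) (ε : ℝ) :
    μ (X ⁻¹' (Ioo ε (1 - ε))ᶜ) ≤ ENNReal.ofReal (2 * ε) := by
  have hS : MeasurableSet (Ioo ε (1 - ε))ᶜ := measurableSet_Ioo.compl
  rw [← Measure.map_apply hX hS, hlaw, Measure.restrict_apply hS]
  exact volume_compl_Ioo_inter_Ioo_le ε

end UniformLaw

section Coincidences

variable {Ω ι β : Type*} [MeasurableSpace Ω] [MeasurableSpace β] {μ : Measure Ω}
  {U : ι → Ω → β} {S : Set β} {p : ℝ≥0∞}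

theorem measure_pair_mem_le (hU : iIndepFun U μ) (hS : MeasurableSet S)
    (hp : ∀ i, μ (U i ⁻¹' S) ≤ p) (i j : ι) :
    μ {ω | i ≠ j ∧ U i ω ∈ S ∧ U j ω ∈ S} ≤ p ^ 2 := by
  rcases eq_or_ne i j with rfl | hij
  · simp
  have hset : {ω | i ≠ j ∧ U i ω ∈ S ∧ U j ω ∈ S} = U i ⁻¹' S ∩ U j ⁻¹' S := by
    ext ω
    simp [hij]
  rw [hset, (hU.indepFun hij).measure_inter_preimage_eq_mul S S hS hS, sq]
  exact mul_le_mul' (hp i) (hp j)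

theorem measure_exists_time_two_sites_mem_le [Fintype ι] {U : ι × ℕ → Ω → β}
    (hU : iIndepFun U μ) (hS : MeasurableSet S) (hp : ∀ i, μ (U i ⁻¹' S) ≤ p) (M : ℕ) :
    μ {ω | ∃ n, 1 ≤ n ∧ n ≤ M ∧ ∃ x y : ι, x ≠ y ∧ U (x, n) ω ∈ S ∧ U (y, n) ω ∈ S}
      ≤ M * Fintype.card ι ^ 2 * p ^ 2 := by
  have hsub : {ω | ∃ n, 1 ≤ n ∧ n ≤ M ∧ ∃ x y : ι, x ≠ y ∧ U (x, n) ω ∈ S ∧ U (y, n) ω ∈ S}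
      ⊆ ⋃ n ∈ Finset.Icc 1 M, ⋃ x, ⋃ y,
          {ω | (x, n) ≠ (y, n) ∧ U (x, n) ω ∈ S ∧ U (y, n) ω ∈ S} := by
    rintro ω ⟨n, h1, hM, x, y, hxy, hx, hy⟩
    simp only [mem_iUnion, Finset.mem_Icc]
    exact ⟨n, ⟨h1, hM⟩, x, y, by simpa using hxy, hx, hy⟩
  calc _ ≤ ∑ n ∈ Finset.Icc 1 M, ∑ x : ι, ∑ y : ι,
          μ {ω | (x, n) ≠ (y, n) ∧ U (x, n) ω ∈ S ∧ U (y, n) ω ∈ S} := by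
        refine (measure_mono hsub).trans ((measure_biUnion_finset_le _ _).trans ?_)
        gcongr with n
        refine (measure_iUnion_fintype_le _ _).trans ?_
        gcongr with x
        exact measure_iUnion_fintype_le _ _
    _ ≤ ∑ _n ∈ Finset.Icc 1 M, ∑ _x : ι, ∑ _y : ι, p ^ 2 := by
        gcongr
        exact measure_pair_mem_le hU hS hp _ _
    _ = M * Fintype.card ι ^ 2 * p ^ 2 := by
        simp only [Finset.sum_const, Nat.card_Icc, Finset.card_univ, nsmul_eq_mul]
        push_cast
        ring

end Coincidences

theorem expected_coincidences_le {L N ε k a : ℝ} (hL : 0 < L) (hN : N ≤ L ^ (8 * k - 4 - a))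
    (hε₀ : 0 ≤ ε) (hε : ε ≤ exp 1 * L ^ (-(4 * k))) :
    N * (L ^ 2) ^ 2 * (2 * ε) ^ 2 ≤ 4 * exp 2 * L ^ (-a) := by
  calc N * (L ^ 2) ^ 2 * (2 * ε) ^ 2
      ≤ L ^ (8 * k - 4 - a) * (L ^ 2) ^ 2 * (2 * (exp 1 * L ^ (-(4 * k)))) ^ 2 := by
        gcongr
    _ = 4 * exp 1 ^ 2 * (L ^ (8 * k - 4 - a) * (L ^ 2) ^ 2 * (L ^ (-(4 * k))) ^ 2) := by
        ring
    _ = 4 * exp 2 * L ^ (-a) := by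
        have h4 : (L ^ 2) ^ 2 = L ^ (4 : ℝ) := by norm_cast; ring
        rw [h4, ← rpow_mul_natCast hL.le, ← rpow_add hL, ← rpow_add hL, ← exp_nat_mul]
        norm_num
        ring_nf

theorem stmt16_general (k c : ℝ) :
    ∃ C₃ > (0:ℝ), ∀ a : ℝ, 0 < a → a < 8 * k - 4 → ∃ L₀ : ℕ, ∀ L : ℕ, L₀ ≤ L → 2 ≤ L →
      ∀ (Ω : Type) (_ : MeasurableSpace Ω) (μ : Measure Ω)
        (_ : IsProbabilityMeasure μ) (U : Site L × ℕ → Ω → ℝ),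
        (∀ i, Measurable (U i)) →
        iIndepFun U μ →
        (∀ i, μ.map (U i) = volume.restrict (Set.Ioo (0:ℝ) 1)) →
        μ {ω | ∃ n : ℕ, 1 ≤ n ∧ (n : ℝ) ≤ (L : ℝ) ^ (8 * k - 4 - a) ∧
            ∃ x y : Site L, x ≠ y ∧
              ¬ typical L k c (U (x, n) ω) ∧ ¬ typical L k c (U (y, n) ω)}
          ≤ ENNReal.ofReal (C₃ * (L : ℝ) ^ (-a)) := by
  refine ⟨4 * exp 2, by positivity, fun a _ _ => ?_⟩
  obtain ⟨L₀, hL₀⟩ := eventually_atTop.mp (eventually_epsL_le k c)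
  refine ⟨L₀, fun L hL₀L hL Ω _ μ _ U hU hind hlaw => ?_⟩
  have : NeZero L := ⟨by omega⟩
  set ε := epsL L k c
  set M := ⌊(L : ℝ) ^ (8 * k - 4 - a)⌋₊
  have hε₀ : 0 ≤ ε := epsL_nonneg L k c
  calc _ ≤ μ {ω | ∃ n, 1 ≤ n ∧ n ≤ M ∧ ∃ x y : Site L, x ≠ y ∧
          U (x, n) ω ∈ (Ioo ε (1 - ε))ᶜ ∧ U (y, n) ω ∈ (Ioo ε (1 - ε))ᶜ} :=
        measure_mono <| by
          rintro ω ⟨n, h1, hn, x, y, hxy, hx, hy⟩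
          exact ⟨n, h1, Nat.le_floor hn, x, y, hxy, hx, hy⟩
    _ ≤ M * Fintype.card (Site L) ^ 2 * ENNReal.ofReal (2 * ε) ^ 2 :=
        measure_exists_time_two_sites_mem_le hind measurableSet_Ioo.compl
          (fun i => measure_preimage_compl_Ioo_le (hU i) (hlaw i) ε) M
    _ = ENNReal.ofReal (M * ((L : ℝ) ^ 2) ^ 2 * (2 * ε) ^ 2) := by
        rw [ENNReal.ofReal_mul (p := M * ((L : ℝ) ^ 2) ^ 2) (by positivity),
          ENNReal.ofReal_pow (by positivity), Fintype.card_prod, ZMod.card, ← sq]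
        norm_cast
    _ ≤ ENNReal.ofReal (4 * exp 2 * (L : ℝ) ^ (-a)) :=
        ENNReal.ofReal_le_ofReal (expected_coincidences_le (by positivity)
          (Nat.floor_le (by positivity)) hε₀ (hL₀ L hL₀L))

/-- In the low temperature regime with parameters `k, c > 0`, there is a
constant `C₃ > 0` such that for every `0 < a < 8k − 4` there is `L₀` with: for all
`L ≥ L₀` and any family `(U_x(n))_{x∈Λ,n≥1}` of i.i.d. uniform random variables on
`(0,1)`, the probability that at some time `n ≤ L^{8k−4−a}` at least two distinct sites
simultaneously have atypical uniform numbers (i.e. that `T ≤ L^{8k−4−a}`) is at most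
`C₃ L^{−a}`. -/
theorem stmt16 (k c : ℝ) (hk : 0 < k) (hc : 0 < c) :
    ∃ C₃ > (0:ℝ), ∀ a : ℝ, 0 < a → a < 8 * k - 4 → ∃ L₀ : ℕ, ∀ L : ℕ, L₀ ≤ L → 2 ≤ L →
      ∀ (Ω : Type) (_ : MeasurableSpace Ω) (μ : Measure Ω)
        (_ : IsProbabilityMeasure μ) (U : Site L × ℕ → Ω → ℝ),
        (∀ i, Measurable (U i)) →
        iIndepFun U μ →
        (∀ i, μ.map (U i) = volume.restrict (Set.Ioo (0:ℝ) 1)) →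
        μ {ω | ∃ n : ℕ, 1 ≤ n ∧ (n : ℝ) ≤ (L : ℝ) ^ (8 * k - 4 - a) ∧
            ∃ x y : Site L, x ≠ y ∧
              ¬ typical L k c (U (x, n) ω) ∧ ¬ typical L k c (U (y, n) ω)}
          ≤ ENNReal.ofReal (C₃ * (L : ℝ) ^ (-a)) :=
  stmt16_general k c
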